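/- arXiv:2406.15924 — 5 statements merged into one kernel-verified Lean document; each statement's English description precedes it below -/
import Mathlib

section
/- Let q : ℂ² → ℂ be a quadratic form (a homogeneous polynomial of degree 2 in two complex variables) such that the set {q(x,ξ) : (x,ξ) ∈ ℝ²} is not all of ℂ and q(x,ξ) ≠ 0 for every (x,ξ) ∈ ℝ² \ {(0,0)}. Then there exist μ ∈ ℂ \ {0} and a complex linear symplectic transformation T of ℂ² (i.e., a 2×2 complex matrix with determinant 1) such that q(T v) = (μ/(2i))·(v₁² + v₂²) for all v = (v₁,v₂) ∈ ℂ². -/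
open Complex

/-!
Over ℂ a binary quadratic form is determined up to `SL(2, ℂ)` by its discriminant, as long as
that is nonzero: completing the square factors `q` into two independent linear forms, which
become the coordinates `u₁, u₂` of the hyperbolic form `μ u₁ u₂`, and `u₁ = v₁ + i v₂`,
`u₂ ∝ v₁ - i v₂` turns this into a multiple of `v₁² + v₂²`. Ellipticity excludes a vanishing
discriminant: then `q = a (x + t ξ)²`, which has a real zero if `t` is real, and otherwise takes
every complex value on `ℝ²`, since `x + t ξ` runs over all of ℂ.
-/

section Substitution

variable {R : Type*} [CommRing R]

def binaryQuadratic (a b c : R) (w : R × R) : R :=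
  a * w.1 ^ 2 + b * w.1 * w.2 + c * w.2 ^ 2

def mulVecProd (T : Matrix (Fin 2) (Fin 2) R) (v : R × R) : R × R :=
  (T 0 0 * v.1 + T 0 1 * v.2, T 1 0 * v.1 + T 1 1 * v.2)

lemma mulVecProd_mul (S T : Matrix (Fin 2) (Fin 2) R) (v : R × R) :
    mulVecProd (S * T) v = mulVecProd S (mulVecProd T v) := by
  simp only [mulVecProd, Matrix.mul_apply, Fin.sum_univ_two, Prod.mk.injEq]
  constructor <;> ring

def SLEquivalent (f g : R × R → R) : Prop :=
  ∃ T : Matrix (Fin 2) (Fin 2) R, T.det = 1 ∧ ∀ v, f (mulVecProd T v) = g v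

lemma SLEquivalent.trans {f g h : R × R → R} (hfg : SLEquivalent f g) (hgh : SLEquivalent g h) :
    SLEquivalent f h := by
  obtain ⟨S, hS, hSf⟩ := hfg
  obtain ⟨T, hT, hTg⟩ := hgh
  exact ⟨S * T, by rw [Matrix.det_mul, hS, hT, one_mul], fun v => by
    rw [mulVecProd_mul, hSf, hTg]⟩

end Substitution

section CharNeTwo

variable {K : Type*} [Field K] [NeZero (2 : K)] {a b c : K}

lemma four_ne_zero_of_two : (4 : K) ≠ 0 := by
  simpa [show (4 : K) = 2 * 2 by norm_num] using two_ne_zero (α := K)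

lemma eq_div_of_discrim_eq_sq {μ : K} (ha : a ≠ 0) (hdisc : discrim a b c = μ ^ 2) :
    c = (b ^ 2 - μ ^ 2) / (4 * a) := by
  rw [eq_div_iff (mul_ne_zero four_ne_zero_of_two ha), discrim] at *
  linear_combination -hdisc

lemma binaryQuadratic_slEquivalent_mul {μ : K} (ha : a ≠ 0) (hμ : μ ≠ 0)
    (hdisc : discrim a b c = μ ^ 2) :
    SLEquivalent (binaryQuadratic a b c) (fun u => μ * u.1 * u.2) := by
  have h4 : (4 : K) ≠ 0 := four_ne_zero_of_two
  -- the inverse of `(x, ξ) ↦ (2a x + (b - μ) ξ, (2a x + (b + μ) ξ) / (4aμ))`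
  refine ⟨!![(b + μ) / (4 * a * μ), -(b - μ); -1 / (2 * μ), 2 * a], ?_, fun u => ?_⟩
  · rw [Matrix.det_fin_two_of]
    field_simp
    ring
  · simp only [binaryQuadratic, mulVecProd, Matrix.of_apply, Matrix.cons_val', Matrix.cons_val_zero,
      Matrix.cons_val_one, Matrix.cons_val_fin_one, eq_div_of_discrim_eq_sq ha hdisc]
    field_simp
    ring

lemma binaryQuadratic_eq_mul_sq_of_discrim_eq_zero (ha : a ≠ 0) (hdisc : discrim a b c = 0)
    (w : K × K) : binaryQuadratic a b c w = a * (w.1 + b / (2 * a) * w.2) ^ 2 := by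
  have h4 : (4 : K) ≠ 0 := four_ne_zero_of_two
  simp only [binaryQuadratic,
    eq_div_of_discrim_eq_sq ha (hdisc.trans (zero_pow two_ne_zero).symm)]
  field_simp
  ring

end CharNeTwo

lemma mul_slEquivalent_sum_sq (μ : ℂ) :
    SLEquivalent (fun u : ℂ × ℂ => -μ * u.1 * u.2) (fun v => μ / (2 * I) * (v.1 ^ 2 + v.2 ^ 2)) := by
  -- `u₁ u₂ = (v₁ + i v₂)(i v₁ + v₂) / 2 = (i / 2)(v₁² + v₂²)`
  refine ⟨!![1, I; I / 2, 1 / 2], ?_, fun v => ?_⟩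
  · rw [Matrix.det_fin_two_of]
    linear_combination (-1 / 2 : ℂ) * I_sq
  · simp only [mulVecProd, Matrix.of_apply, Matrix.cons_val', Matrix.cons_val_zero,
      Matrix.cons_val_one, Matrix.cons_val_fin_one]
    rw [mul_comm 2 I, ← div_div, div_I]
    linear_combination (-μ / 2 * v.1 * v.2) * I_sq

lemma binaryQuadratic_slEquivalent_sum_sq {a b c : ℂ} (ha : a ≠ 0) (hdisc : discrim a b c ≠ 0) :
    ∃ μ ≠ 0, SLEquivalent (binaryQuadratic a b c) (fun v => μ / (2 * I) * (v.1 ^ 2 + v.2 ^ 2)) := by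
  obtain ⟨μ, hμ⟩ := IsAlgClosed.exists_eq_mul_self (discrim a b c)
  have hμ0 : μ ≠ 0 := by rintro rfl; exact hdisc (by simpa using hμ)
  refine ⟨μ, hμ0, (binaryQuadratic_slEquivalent_mul ha (neg_ne_zero.2 hμ0) ?_).trans
    (mul_slEquivalent_sum_sq μ)⟩
  rw [hμ, neg_sq, sq]

lemma exists_ofReal_add_mul_ofReal_eq {t : ℂ} (ht : t.im ≠ 0) (w : ℂ) :
    ∃ x ξ : ℝ, (x : ℂ) + t * ξ = w :=
  ⟨w.re - t.re * (w.im / t.im), w.im / t.im, by apply Complex.ext <;> simp; field_simp⟩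

lemma discrim_ne_zero_of_elliptic {a b c : ℂ} (ha : a ≠ 0)
    (hrange : {z : ℂ | ∃ x ξ : ℝ, binaryQuadratic a b c ((x : ℂ), (ξ : ℂ)) = z} ≠ Set.univ)
    (hnz : ∀ x ξ : ℝ, ¬(x = 0 ∧ ξ = 0) → binaryQuadratic a b c ((x : ℂ), (ξ : ℂ)) ≠ 0) :
    discrim a b c ≠ 0 := by
  intro hdisc
  have hsq := binaryQuadratic_eq_mul_sq_of_discrim_eq_zero ha hdisc
  set t := b / (2 * a)
  by_cases ht : t.im = 0
  · refine hnz (-t.re) 1 (by simp) ?_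
    have htr : (t.re : ℂ) = t := Complex.ext rfl (by simp [ht])
    rw [hsq]
    push_cast
    rw [htr]
    ring
  · refine hrange (Set.eq_univ_of_forall fun z => ?_)
    obtain ⟨w, hw⟩ := IsAlgClosed.exists_pow_nat_eq (z / a) two_pos
    obtain ⟨x, ξ, hxξ⟩ := exists_ofReal_add_mul_ofReal_eq ht w
    refine ⟨x, ξ, ?_⟩
    rw [hsq, hxξ, hw, mul_div_cancel₀ z ha]

/-- Reduction of an elliptic quadratic form on ℂ² with non-full real range to the
normal form (μ/(2i))(x² + ξ²) by a complex linear symplectic transformation. -/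
theorem stmt1
    (a b c : ℂ) (q : ℂ × ℂ → ℂ)
    (hq : ∀ w : ℂ × ℂ, q w = a * w.1 ^ 2 + b * w.1 * w.2 + c * w.2 ^ 2)
    (hrange : {z : ℂ | ∃ x ξ : ℝ, q ((x : ℂ), (ξ : ℂ)) = z} ≠ Set.univ)
    (hnz : ∀ x ξ : ℝ, ¬(x = 0 ∧ ξ = 0) → q ((x : ℂ), (ξ : ℂ)) ≠ 0) :
    ∃ (μ : ℂ) (T : Matrix (Fin 2) (Fin 2) ℂ),
      μ ≠ 0 ∧ T.det = 1 ∧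
      ∀ v : ℂ × ℂ,
        q (T 0 0 * v.1 + T 0 1 * v.2, T 1 0 * v.1 + T 1 1 * v.2)
          = μ / (2 * Complex.I) * (v.1 ^ 2 + v.2 ^ 2) := by
  obtain rfl : q = binaryQuadratic a b c := funext hq
  have ha : a ≠ 0 := by simpa [binaryQuadratic] using hnz 1 0 (by simp)
  obtain ⟨μ, hμ, T, hT, hTq⟩ :=
    binaryQuadratic_slEquivalent_sum_sq ha (discrim_ne_zero_of_elliptic ha hrange hnz)
  exact ⟨μ, T, hμ, hT, hTq⟩
end

section
/- Let q : ℂ² → ℂ be a quadratic form (a homogeneous polynomial of degree 2 in two complex variables) such that the set {q(x,ξ) : (x,ξ) ∈ ℝ²} is not all of ℂ and q(x,ξ) ≠ 0 for every (x,ξ) ∈ ℝ² \ {(0,0)}. Then there exists λ ∈ ℂ such that Re(λ·q(v)) > 0 for all v ∈ ℝ² \ {(0,0)}. -/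
/-!
Put `z = x + ξ i`. Since `x = (z + z̄) / 2` and `ξ = (z - z̄) / 2i`, the form becomes
`q(x, ξ) = A z² + B |z|² + C z̄² = ψ(z²)` with `ψ(y) = ‖y‖ B + L y`, where `L y = A y + C ȳ`
is ℝ-linear; as `z ↦ z²` is onto, `q(ℝ²) = ψ(ℂ)`. The map `ψ` is positively homogeneous, so
everything is decided by the filled ellipse `K = B + L(closed unit disc)`. If `0 ∉ K`,
Hahn–Banach separates `0` from `K`, and the separating functional is `Re(λ ·)`. If `0 = B + L u`
with `‖u‖ ≤ 1` while `ψ` has no zero on the unit circle, then `L` is injective (moving `u` along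
a kernel vector would reach the circle), hence invertible, and every ray from `0` leaves `K`
through the ellipse `B + L(circle)`, which makes `ψ` onto.
-/

open Complex
open scoped ComplexConjugate

section NormedSpace

variable {E : Type*} [NormedAddCommGroup E] [NormedSpace ℝ E]

theorem exists_nonneg_norm_add_smul_eq_one {u m : E} (hu : ‖u‖ ≤ 1) (hm : m ≠ 0) :
    ∃ t : ℝ, 0 ≤ t ∧ ‖u + t • m‖ = 1 := by
  have hT : 0 ≤ 2 / ‖m‖ := by positivity
  have hcont : ContinuousOn (fun t : ℝ => ‖u + t • m‖) (Set.Icc 0 (2 / ‖m‖)) := by fun_prop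
  have hfar : 1 ≤ ‖u + (2 / ‖m‖) • m‖ := by
    have h := norm_sub_norm_le ((2 / ‖m‖) • m) (-u)
    rw [norm_smul, Real.norm_of_nonneg hT, div_mul_cancel₀ _ (norm_ne_zero_iff.mpr hm),
      norm_neg, sub_neg_eq_add, add_comm] at h
    linarith
  obtain ⟨t, ⟨ht, -⟩, hnorm⟩ :=
    intermediate_value_Icc hT hcont ⟨by simpa using hu, hfar⟩
  exact ⟨t, ht, hnorm⟩

variable [FiniteDimensional ℝ E] (B : E) (L : E →ₗ[ℝ] E)

theorem exists_norm_eq_one_add_apply_eq_smul {u : E} (hu : ‖u‖ ≤ 1) (hBu : B + L u = 0)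
    (hsphere : ∀ w, ‖w‖ = 1 → B + L w ≠ 0) {ζ : E} (hζ : ζ ≠ 0) :
    ∃ w, ‖w‖ = 1 ∧ ∃ t : ℝ, 0 < t ∧ B + L w = t • ζ := by
  have hinj : Function.Injective L := by
    refine (injective_iff_map_eq_zero L).mpr fun k hk => by_contra fun hk0 => ?_
    obtain ⟨t, -, ht⟩ := exists_nonneg_norm_add_smul_eq_one hu hk0
    exact hsphere _ ht (by rw [map_add, map_smul, hk, smul_zero, add_zero, hBu])
  obtain ⟨m, rfl⟩ := LinearMap.injective_iff_surjective.mp hinj ζ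
  have hm : m ≠ 0 := ne_of_apply_ne L (by simpa using hζ)
  obtain ⟨t, ht, hnorm⟩ := exists_nonneg_norm_add_smul_eq_one hu hm
  have hval : B + L (u + t • m) = t • L m := by rw [map_add, map_smul, ← add_assoc, hBu, zero_add]
  refine ⟨u + t • m, hnorm, t, ht.lt_of_ne fun ht0 => ?_, hval⟩
  subst ht0
  exact hsphere u (by simpa using hnorm) hBu

theorem surjective_norm_smul_add_apply {u : E} (hu : ‖u‖ ≤ 1) (hBu : B + L u = 0)
    (hne : ∀ y, y ≠ 0 → ‖y‖ • B + L y ≠ 0) :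
    Function.Surjective fun y => ‖y‖ • B + L y := by
  intro ζ
  rcases eq_or_ne ζ 0 with rfl | hζ
  · exact ⟨0, by simp⟩
  have hsphere : ∀ w, ‖w‖ = 1 → B + L w ≠ 0 := fun w hw => by
    simpa [hw] using hne w (norm_ne_zero_iff.mp (by rw [hw]; exact one_ne_zero))
  obtain ⟨w, hw, t, ht, hBw⟩ := exists_norm_eq_one_add_apply_eq_smul B L hu hBu hsphere hζ
  refine ⟨t⁻¹ • w, ?_⟩
  simp only [norm_smul, hw, Real.norm_of_nonneg (inv_nonneg.mpr ht.le), mul_one, map_smul]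
  rw [← smul_add, hBw, inv_smul_smul₀ ht.ne']

theorem exists_dual_pos_norm_smul_add_apply (hne : ∀ y, y ≠ 0 → ‖y‖ • B + L y ≠ 0)
    (hsurj : ¬Function.Surjective fun y => ‖y‖ • B + L y) :
    ∃ f : StrongDual ℝ E, ∀ y, y ≠ 0 → 0 < f (‖y‖ • B + L y) := by
  set K := (fun x => B + x) '' (L '' Metric.closedBall 0 1)
  have hconv : Convex ℝ K := ((convex_closedBall 0 1).linear_image L).translate B
  have hcpt : IsCompact K :=
    ((isCompact_closedBall 0 1).image L.continuous_of_finiteDimensional).image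
      (continuous_const.add continuous_id)
  have h0 : (0 : E) ∉ K := by
    rintro ⟨_, ⟨u, hu, rfl⟩, hBu⟩
    exact hsurj (surjective_norm_smul_add_apply B L (mem_closedBall_zero_iff.mp hu) hBu hne)
  obtain ⟨f, c, hf0, hfK⟩ := geometric_hahn_banach_point_closed hconv hcpt.isClosed h0
  refine ⟨f, fun y hy => ?_⟩
  have hy' : 0 < ‖y‖ := norm_pos_iff.mpr hy
  have hmem : B + L (‖y‖⁻¹ • y) ∈ K := ⟨_, ⟨_, by simp [norm_smul, hy'.ne'], rfl⟩, rfl⟩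
  have hscale : ‖y‖ • B + L y = ‖y‖ • (B + L (‖y‖⁻¹ • y)) := by
    rw [smul_add, map_smul, smul_inv_smul₀ hy'.ne']
  rw [hscale, map_smul, smul_eq_mul]
  exact mul_pos hy' (by linarith [hfK _ hmem, map_zero f])

end NormedSpace

theorem Complex.exists_re_mul_eq (f : ℂ →ₗ[ℝ] ℝ) : ∃ l : ℂ, ∀ z, f z = (l * z).re := by
  refine ⟨f 1 - f I * I, fun z => ?_⟩
  conv_lhs => rw [← re_add_im z, ← mul_one (z.re : ℂ)]
  simp only [← real_smul, map_add, map_smul, smul_eq_mul]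
  simp only [real_smul, mul_re, sub_re, ofReal_re, I_re, mul_zero, ofReal_im, I_im, mul_one,
    sub_self, sub_zero, sub_im, mul_im, add_zero, zero_sub, neg_mul, sub_neg_eq_add]
  ring

def Complex.mulAddMulConj (A C : ℂ) : ℂ →ₗ[ℝ] ℂ where
  toFun u := A * u + C * conj u
  map_add' u v := by simp only [map_add]; ring
  map_smul' r u := by simp only [real_smul, map_mul, conj_ofReal, RingHom.id_apply]; ring

theorem Complex.quadratic_eq_norm_smul_add_mulAddMulConj (a b c : ℂ) (x ξ : ℝ) :
    a * x ^ 2 + b * x * ξ + c * ξ ^ 2 =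
      ‖((x : ℂ) + ξ * I) ^ 2‖ • ((a + c) / 2) +
        mulAddMulConj ((a - b * I - c) / 4) ((a + b * I - c) / 4) (((x : ℂ) + ξ * I) ^ 2) := by
  have hnorm : ‖((x : ℂ) + ξ * I) ^ 2‖ = x ^ 2 + ξ ^ 2 := by
    rw [norm_pow, Complex.sq_norm, normSq_add_mul_I]
  simp only [hnorm, mulAddMulConj, LinearMap.coe_mk, AddHom.coe_mk, map_pow, map_add, map_mul,
    conj_ofReal, conj_I, real_smul]
  push_cast
  linear_combination (b * x * ξ - (a - c) / 2 * ξ ^ 2) * I_sq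

/-- For an elliptic quadratic form q on ℂ² whose range on ℝ² is not all of ℂ,
there is λ ∈ ℂ with Re(λ·q(v)) > 0 for all real v ≠ 0. -/
theorem stmt2
    (a b c : ℂ) (q : ℂ × ℂ → ℂ)
    (hq : ∀ w : ℂ × ℂ, q w = a * w.1 ^ 2 + b * w.1 * w.2 + c * w.2 ^ 2)
    (hrange : {z : ℂ | ∃ x ξ : ℝ, q ((x : ℂ), (ξ : ℂ)) = z} ≠ Set.univ)
    (hnz : ∀ x ξ : ℝ, ¬(x = 0 ∧ ξ = 0) → q ((x : ℂ), (ξ : ℂ)) ≠ 0) :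
    ∃ l : ℂ, ∀ x ξ : ℝ, ¬(x = 0 ∧ ξ = 0) →
      0 < (l * q ((x : ℂ), (ξ : ℂ))).re := by
  set B := (a + c) / 2
  set L := mulAddMulConj ((a - b * I - c) / 4) ((a + b * I - c) / 4)
  have hqz : ∀ z : ℂ, q (z.re, z.im) = ‖z ^ 2‖ • B + L (z ^ 2) := fun z => by
    rw [hq, quadratic_eq_norm_smul_add_mulAddMulConj, re_add_im]
  have hne : ∀ y : ℂ, y ≠ 0 → ‖y‖ • B + L y ≠ 0 := by
    intro y hy hy0
    obtain ⟨z, rfl⟩ := IsAlgClosed.exists_pow_nat_eq y two_pos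
    refine hnz z.re z.im (fun h => pow_ne_zero_iff two_ne_zero |>.mp hy (ext h.1 h.2)) ?_
    rwa [hqz]
  have hsurj : ¬Function.Surjective fun y : ℂ => ‖y‖ • B + L y := fun hs =>
    hrange <| Set.eq_univ_of_forall fun ζ => by
      obtain ⟨y, rfl⟩ := hs ζ
      obtain ⟨z, rfl⟩ := IsAlgClosed.exists_pow_nat_eq y two_pos
      exact ⟨z.re, z.im, hqz z⟩
  obtain ⟨f, hf⟩ := exists_dual_pos_norm_smul_add_apply B L hne hsurj
  obtain ⟨l, hl⟩ := Complex.exists_re_mul_eq f.toLinearMap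
  refine ⟨l, fun x ξ hxξ => ?_⟩
  have hz : (x : ℂ) + ξ * I ≠ 0 := fun h =>
    hxξ ⟨by simpa using congrArg re h, by simpa using congrArg im h⟩
  rw [show q (x, ξ) = q ((x + ξ * I : ℂ).re, (x + ξ * I : ℂ).im) by simp, hqz, ← hl]
  exact hf _ (pow_ne_zero 2 hz)
end

section
/- Let h > 0, ρ > 0 and let j ∈ ℕ satisfy j + 1 ≤ ρ²/(4h). Then (1/(π·j!·h^{j+1}))·∫_{{x ∈ ℂ : |x| > ρ}} |x|^{2j}·e^{−|x|²/h} dL(x) ≤ e^{−ρ²/(4h)}. Equivalently, the function φ_j(x) = (π·j!)^{−1/2}·h^{−(j+1)/2}·x^j satisfies ∫_{|x|>ρ} |φ_j(x)|² e^{−2Φ₀(x)/h} dL(x) ≤ e^{−ρ²/(4h)}. -/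
/-!
In polar coordinates the left side is `2 / (j! h^{j+1}) * ∫_ρ^∞ r^{2j+1} e^{-r²/h} dr`. Spending
half of the Gaussian on the monomial, `r^{2j} e^{-r²/(2h)} ≤ (2h)^j j!` (from `s^j / j! ≤ e^s`),
leaves `∫_ρ^∞ r e^{-r²/(2h)} dr = h e^{-ρ²/(2h)}`, so the left side is at most
`2^{j+1} e^{-ρ²/(2h)}`. The hypothesis `j + 1 ≤ ρ²/(4h)` makes `2^{j+1} ≤ e^{j+1}` cost only half
of that exponent.
-/

open Complex MeasureTheory
open Real Set Filter Topology
open scoped Nat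

theorem setIntegral_fun_norm_lt_norm {F : Type*} [NormedAddCommGroup F] [NormedSpace ℝ F]
    {ρ : ℝ} (hρ : 0 ≤ ρ) (f : ℝ → F) :
    ∫ x in {x : ℂ | ρ < ‖x‖}, f ‖x‖ = (2 * π) • ∫ r in Ioi ρ, r • f r := by
  have hS : MeasurableSet {x : ℂ | ρ < ‖x‖} :=
    measurableSet_lt measurable_const measurable_norm
  have hind : {x : ℂ | ρ < ‖x‖}.indicator (fun x => f ‖x‖) =
      fun x => (Ioi ρ).indicator f ‖x‖ :=
    funext fun x => by by_cases hx : ρ < ‖x‖ <;> simp [indicator, hx]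
  have hradial :
      ∫ r in Ioi (0 : ℝ), r ^ (2 - 1) • (Ioi ρ).indicator f r = ∫ r in Ioi ρ, r • f r := by
    have : (fun r : ℝ => r ^ (2 - 1) • (Ioi ρ).indicator f r) =
        (Ioi ρ).indicator (fun r => r • f r) :=
      funext fun r => by simpa using (indicator_smul_apply (Ioi ρ) (fun r => r) f r).symm
    rw [this, setIntegral_indicator measurableSet_Ioi, Ioi_inter_Ioi, max_eq_right hρ]
  rw [← integral_indicator hS, hind, integral_fun_norm_addHaar volume,
    Complex.finrank_real_complex, hradial, Measure.real, Complex.volume_ball]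
  simp [mul_smul, two_smul]

theorem pow_mul_exp_neg_le_factorial {s : ℝ} (hs : 0 ≤ s) (n : ℕ) :
    s ^ n * rexp (-s) ≤ n ! := by
  have := Real.pow_div_factorial_le_exp _ hs n
  rw [div_le_iff₀ (by positivity)] at this
  rw [Real.exp_neg, ← div_eq_mul_inv, div_le_iff₀ (Real.exp_pos s)]
  linarith

theorem pow_two_mul_mul_exp_neg_sq_div_le {h : ℝ} (hh : 0 < h) (j : ℕ) (r : ℝ) :
    r ^ (2 * j) * rexp (-r ^ 2 / h) ≤ (2 * h) ^ j * j ! * rexp (-(1 / (2 * h)) * r ^ 2) := by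
  have hsplit :
      rexp (-r ^ 2 / h) = rexp (-(r ^ 2 / (2 * h))) * rexp (-(1 / (2 * h)) * r ^ 2) := by
    rw [← Real.exp_add]; congr 1; field_simp; ring
  have hpow : r ^ (2 * j) = (2 * h) ^ j * (r ^ 2 / (2 * h)) ^ j := by
    rw [← mul_pow, mul_div_cancel₀ _ (by positivity), pow_mul]
  calc r ^ (2 * j) * rexp (-r ^ 2 / h)
      = (2 * h) ^ j * ((r ^ 2 / (2 * h)) ^ j * rexp (-(r ^ 2 / (2 * h))))
          * rexp (-(1 / (2 * h)) * r ^ 2) := by rw [hsplit, hpow]; ring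
    _ ≤ (2 * h) ^ j * j ! * rexp (-(1 / (2 * h)) * r ^ 2) := by
      gcongr
      exact pow_mul_exp_neg_le_factorial (by positivity) j

theorem integral_Ioi_mul_exp_neg_mul_sq {b : ℝ} (hb : 0 < b) (ρ : ℝ) :
    ∫ r in Ioi ρ, r * rexp (-b * r ^ 2) = rexp (-b * ρ ^ 2) / (2 * b) := by
  have hderiv : ∀ x ∈ Ici ρ, HasDerivAt (fun r => -rexp (-b * r ^ 2) / (2 * b))
      (x * rexp (-b * x ^ 2)) x := fun x _ => by
    refine (((hasDerivAt_pow 2 x).const_mul (-b)).exp.neg.div_const (2 * b)).congr_deriv ?_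
    field_simp
    ring
  have hlim : Tendsto (fun r => -rexp (-b * r ^ 2) / (2 * b)) atTop (𝓝 0) := by
    have hsq : Tendsto (fun r : ℝ => -b * r ^ 2) atTop atBot :=
      (tendsto_pow_atTop two_ne_zero).const_mul_atTop_of_neg (neg_neg_of_pos hb)
    simpa using (Real.tendsto_exp_atBot.comp hsq).neg.div_const (2 * b)
  rw [integral_Ioi_of_hasDerivAt_of_tendsto' hderiv
    (integrable_mul_exp_neg_mul_sq hb).integrableOn hlim]
  ring

theorem integral_Ioi_pow_mul_exp_neg_sq_div_le {h ρ : ℝ} (hh : 0 < h) (hρ : 0 ≤ ρ) (j : ℕ) :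
    ∫ r in Ioi ρ, r * (r ^ (2 * j) * rexp (-r ^ 2 / h))
      ≤ (2 * h) ^ j * j ! * h * rexp (-ρ ^ 2 / (2 * h)) := by
  have hb : (0 : ℝ) < 1 / (2 * h) := by positivity
  calc ∫ r in Ioi ρ, r * (r ^ (2 * j) * rexp (-r ^ 2 / h))
      ≤ ∫ r in Ioi ρ, (2 * h) ^ j * j ! * (r * rexp (-(1 / (2 * h)) * r ^ 2)) := by
        refine integral_mono_of_nonneg ?_
          ((integrable_mul_exp_neg_mul_sq hb).const_mul _).integrableOn ?_
        all_goals filter_upwards [ae_restrict_mem measurableSet_Ioi] with r hr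
        · have : 0 ≤ r := hρ.trans hr.le
          positivity
        · calc r * (r ^ (2 * j) * rexp (-r ^ 2 / h))
              ≤ r * ((2 * h) ^ j * j ! * rexp (-(1 / (2 * h)) * r ^ 2)) :=
                mul_le_mul_of_nonneg_left (pow_two_mul_mul_exp_neg_sq_div_le hh j r)
                  (hρ.trans hr.le)
            _ = _ := by ring
    _ = (2 * h) ^ j * j ! * h * rexp (-ρ ^ 2 / (2 * h)) := by
        rw [integral_const_mul, integral_Ioi_mul_exp_neg_mul_sq hb]
        field_simp

theorem two_pow_mul_exp_neg_two_mul_le {n : ℕ} {a : ℝ} (ha : (n : ℝ) ≤ a) :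
    2 ^ n * rexp (-(2 * a)) ≤ rexp (-a) := by
  have h2 : (2 : ℝ) ^ n ≤ rexp a :=
    calc (2 : ℝ) ^ n ≤ rexp 1 ^ n := by gcongr; linarith [Real.add_one_le_exp (1 : ℝ)]
      _ = rexp n := by rw [← Real.exp_nat_mul, mul_one]
      _ ≤ rexp a := Real.exp_le_exp.2 ha
  calc 2 ^ n * rexp (-(2 * a)) ≤ rexp a * rexp (-(2 * a)) := by gcongr
    _ = rexp (-a) := by rw [← Real.exp_add]; ring_nf

/-- Exponential smallness of the weighted mass of the monomial x^j outside the
disc of radius ρ, when j + 1 ≤ ρ²/(4h). -/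
theorem stmt8
    (h ρ : ℝ) (hh : 0 < h) (hρ : 0 < ρ) (j : ℕ)
    (hj : (j : ℝ) + 1 ≤ ρ ^ 2 / (4 * h)) :
    (1 / (Real.pi * (Nat.factorial j : ℝ) * h ^ (j + 1))) *
      (∫ x in {x : ℂ | ρ < ‖x‖},
        ‖x‖ ^ (2 * j) * Real.exp (-‖x‖ ^ 2 / h))
      ≤ Real.exp (-ρ ^ 2 / (4 * h)) := by
  have hpolar := setIntegral_fun_norm_lt_norm hρ.le fun r => r ^ (2 * j) * rexp (-r ^ 2 / h)
  simp only [smul_eq_mul] at hpolar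
  have hexp : -ρ ^ 2 / (2 * h) = -(2 * (ρ ^ 2 / (4 * h))) := by field_simp; ring
  calc (1 / (π * j ! * h ^ (j + 1))) *
        ∫ x in {x : ℂ | ρ < ‖x‖}, ‖x‖ ^ (2 * j) * rexp (-‖x‖ ^ 2 / h)
      ≤ (1 / (π * j ! * h ^ (j + 1))) *
        (2 * π * ((2 * h) ^ j * j ! * h * rexp (-ρ ^ 2 / (2 * h)))) := by
        rw [hpolar]
        gcongr
        exact integral_Ioi_pow_mul_exp_neg_sq_div_le hh hρ.le j
    _ = 2 ^ (j + 1) * rexp (-(2 * (ρ ^ 2 / (4 * h)))) := by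
        rw [hexp]
        field_simp
        ring
    _ ≤ rexp (-ρ ^ 2 / (4 * h)) := by
        rw [neg_div]
        exact two_pow_mul_exp_neg_two_mul_le (by push_cast; exact hj)
end

section
/- For every E₀ > 0 there exist c₀ > 0 and θ₁ ∈ (0,1] such that for all θ ∈ (0,θ₁] and all ξ ∈ ℝ: |(1−iθ)²·(ξ/(1+θ²))² − E₀| ≥ c₀·θ·(1 + ξ²). -/
/-!
Write `η = ξ / (1 + θ²)`, so the symbol is `(1 - θ²) η² - E₀ - 2θη² i`. For `η² ≤ E₀ / 2` its real
part stays at distance `≥ E₀ / 2` from zero, and for `η² ≥ E₀ / 2` its imaginary part `2θη²` is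
comparable to `θ (1 + η²)`. Since `θ ≤ 1 / 2` gives `ξ² ≤ 2η²`, either bound controls `θ (1 + ξ²)`.
-/

open Complex

lemma re_one_sub_mul_I_sq_mul_sq_sub (θ η E : ℝ) :
    ((1 - θ * I) ^ 2 * (η : ℂ) ^ 2 - E).re = (1 - θ ^ 2) * η ^ 2 - E := by
  simp [sq]

lemma im_one_sub_mul_I_sq_mul_sq_sub (θ η E : ℝ) :
    ((1 - θ * I) ^ 2 * (η : ℂ) ^ 2 - E).im = -(2 * θ * η ^ 2) := by
  simp [sq]; ring

lemma max_abs_re_abs_im_le_norm (z : ℂ) : max |z.re| |z.im| ≤ ‖z‖ :=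
  max_le (abs_re_le_norm z) (abs_im_le_norm z)

lemma one_add_sq_sq_le_two {θ : ℝ} (hθ₀ : 0 ≤ θ) (hθ : θ ≤ 1 / 2) : (1 + θ ^ 2) ^ 2 ≤ 2 := by
  have hθ' : θ ^ 2 ≤ 1 / 4 := by nlinarith
  nlinarith

lemma mul_one_add_two_mul_le_max_abs_sub {E θ t : ℝ} (hE : 0 < E) (hθ₀ : 0 < θ) (hθ : θ ≤ 1) (ht : 0 ≤ t) :
    E / (2 * (1 + E)) * θ * (1 + 2 * t) ≤ max |(1 - θ ^ 2) * t - E| (2 * θ * t) := by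
  have hc : E / (2 * (1 + E)) * (2 * (1 + E)) = E := by field_simp
  rcases le_total t (E / 2) with hsmall | hlarge
  · have hre : E / 2 ≤ |(1 - θ ^ 2) * t - E| := by
      rw [abs_sub_comm, abs_of_nonneg (by nlinarith)]
      nlinarith
    calc E / (2 * (1 + E)) * θ * (1 + 2 * t)
        ≤ E / (2 * (1 + E)) * 1 * (1 + E) := by gcongr; linarith
      _ = E / 2 := by linear_combination hc / 2
      _ ≤ _ := hre.trans (le_max_left _ _)
  · have hcoef : E / (2 * (1 + E)) * (1 + 2 * t) ≤ 2 * t := by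
      calc E / (2 * (1 + E)) * (1 + 2 * t) ≤ E / (2 * (1 + E)) * (2 * t / E + 2 * t) := by
            gcongr; rw [le_div_iff₀ hE]; linarith
        _ = t := by field_simp
        _ ≤ 2 * t := by linarith
    calc E / (2 * (1 + E)) * θ * (1 + 2 * t) = θ * (E / (2 * (1 + E)) * (1 + 2 * t)) := by ring
      _ ≤ θ * (2 * t) := by gcongr
      _ = 2 * θ * t := by ring
      _ ≤ _ := le_max_right _ _

/-- Ellipticity near infinity of the complex-scaled free symbol:
|(1−iθ)²(ξ/(1+θ²))² − E₀| ≥ c₀θ(1+ξ²) for small θ. -/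
theorem stmt10 (E₀ : ℝ) (hE₀ : 0 < E₀) :
    ∃ c₀ θ₁ : ℝ, 0 < c₀ ∧ 0 < θ₁ ∧ θ₁ ≤ 1 ∧
      ∀ θ : ℝ, θ ∈ Set.Ioc (0 : ℝ) θ₁ → ∀ ξ : ℝ,
        c₀ * θ * (1 + ξ ^ 2) ≤
          ‖(1 - θ * Complex.I) ^ 2 * ((ξ / (1 + θ ^ 2) : ℝ) : ℂ) ^ 2 - (E₀ : ℂ)‖ := by
  refine ⟨E₀ / (2 * (1 + E₀)), 1 / 2, by positivity, by norm_num, by norm_num, ?_⟩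
  rintro θ ⟨hθ₀, hθ⟩ ξ
  set η := ξ / (1 + θ ^ 2)
  have hξ : ξ ^ 2 ≤ 2 * η ^ 2 := by
    have hξη : ξ ^ 2 = (1 + θ ^ 2) ^ 2 * η ^ 2 := by simp only [η]; field_simp
    rw [hξη]
    gcongr
    exact one_add_sq_sq_le_two hθ₀.le hθ
  have hmax := max_abs_re_abs_im_le_norm ((1 - θ * I) ^ 2 * (η : ℂ) ^ 2 - E₀)
  rw [re_one_sub_mul_I_sq_mul_sq_sub, im_one_sub_mul_I_sq_mul_sq_sub, abs_neg,
    abs_of_nonneg (by positivity : 0 ≤ 2 * θ * η ^ 2)] at hmax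
  calc E₀ / (2 * (1 + E₀)) * θ * (1 + ξ ^ 2) ≤ E₀ / (2 * (1 + E₀)) * θ * (1 + 2 * η ^ 2) := by
        gcongr
    _ ≤ _ := mul_one_add_two_mul_le_max_abs_sub hE₀ hθ₀ (by linarith) (sq_nonneg η)
    _ ≤ _ := hmax
end

section
/- Let h > 0 and define the FBI–Bargmann transform T_h u(z) = ∫_ℝ e^{iφ(z,x)/h}·u(x) dx with phase φ(z,x) = i(z²/2 − √2·z·x + x²/2), for u a Schwartz function on ℝ. Then for every Schwartz function u and every z ∈ ℂ: T_h(−h²·u″ + x²·u)(z) = 2·z·h·(d/dz)(T_h u)(z) + h·(T_h u)(z). That is, T_h intertwines the harmonic oscillator (hD_x)² + x² with the operator 2zh∂_z + h. -/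
/-!
Integrating by parts twice moves `-h²∂ₓ²` from `u` onto the kernel `K(z, x) = e^{iφ(z,x)/h}`,
and `K` satisfies the pointwise identity `(-h²∂ₓ² + x²) K = (2zh∂_z + h) K`. Differentiating
under the integral sign turns the right-hand side into `2zh ∂_z T_h u + h T_h u`. All integrals
converge because `|K(z, x)| ≤ e^{|z|²/2h}` and the `x`-derivatives of `K` are `K` times
polynomials in `x`, while `u` decays rapidly.
-/

open MeasureTheory Asymptotics Complex SchwartzMap

namespace SchwartzMap

variable {E V : Type*} [NormedAddCommGroup E] [NormedSpace ℝ E] [MeasurableSpace E] [BorelSpace E]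
  [SecondCountableTopology E] [NormedAddCommGroup V] [NormedSpace ℝ V]
  {μ : Measure E} [μ.HasTemperateGrowth]

theorem integrable_one_add_norm_pow_mul (v : 𝓢(E, V)) (k : ℕ) :
    Integrable (fun x ↦ (1 + ‖x‖) ^ k * ‖v x‖) μ := by
  refine (((v.integrable (μ := μ)).norm.add (v.integrable_pow_mul μ k)).const_mul
    (2 ^ (k - 1))).mono' (by fun_prop) (.of_forall fun x ↦ ?_)
  have := add_pow_le zero_le_one (norm_nonneg x) k
  rw [one_pow] at this
  rw [norm_mul, norm_norm, norm_pow, Real.norm_of_nonneg (by positivity), Pi.add_apply,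
    ← one_add_mul, ← mul_assoc]
  gcongr

theorem integrable_mul_of_isBigO (v : 𝓢(E, ℂ)) {g : E → ℂ} {k : ℕ}
    (hg : g =O[⊤] fun x ↦ (1 + ‖x‖) ^ k) (hgm : AEStronglyMeasurable g μ) :
    Integrable (fun x ↦ g x * v x) μ := by
  obtain ⟨C, hC⟩ := isBigO_top.1 hg
  refine ((v.integrable_one_add_norm_pow_mul k).const_mul C).mono'
    (hgm.mul v.continuous.aestronglyMeasurable) (.of_forall fun x ↦ ?_)
  rw [norm_mul, ← mul_assoc]
  have := hC x
  rw [Real.norm_of_nonneg (by positivity)] at this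
  gcongr

theorem integral_mul_derivCLM_eq_neg (v : 𝓢(ℝ, ℂ)) {f f' : ℝ → ℂ} {k : ℕ}
    (hf : ∀ x, HasDerivAt f (f' x) x) (hf' : Continuous f')
    (hfO : f =O[⊤] fun x ↦ (1 + ‖x‖) ^ k) (hf'O : f' =O[⊤] fun x ↦ (1 + ‖x‖) ^ k) :
    ∫ x, f x * derivCLM ℝ ℂ v x = -∫ x, f' x * v x := by
  have hfc : Continuous f := continuous_iff_continuousAt.2 fun x ↦ (hf x).continuousAt
  refine integral_mul_deriv_eq_deriv_mul_of_integrable (fun x _ ↦ hf x) (fun x _ ↦ ?_)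
    ((derivCLM ℝ ℂ v).integrable_mul_of_isBigO hfO hfc.aestronglyMeasurable)
    (v.integrable_mul_of_isBigO hf'O hf'.aestronglyMeasurable)
    (v.integrable_mul_of_isBigO hfO hfc.aestronglyMeasurable)
  simpa only [derivCLM_apply] using v.hasDerivAt x

theorem iteratedDeriv_two_eq (v : 𝓢(ℝ, V)) :
    iteratedDeriv 2 v = derivCLM ℝ V (derivCLM ℝ V v) := by
  ext x
  rw [iteratedDeriv_succ, iteratedDeriv_one, derivCLM_apply]
  congr 1

end SchwartzMap

theorem norm_sqrt_two_mul_sub_le (a b : ℂ) : ‖√2 * a - b‖ ≤ 2 * (‖a‖ + ‖b‖) := by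
  have hs : √2 ≤ 2 := by rw [Real.sqrt_le_left zero_le_two]; norm_num
  calc ‖√2 * a - b‖ ≤ √2 * ‖a‖ + ‖b‖ := by
        refine (norm_sub_le _ _).trans ?_
        rw [norm_mul, norm_real, Real.norm_of_nonneg (Real.sqrt_nonneg 2)]
    _ ≤ 2 * (‖a‖ + ‖b‖) := by nlinarith [norm_nonneg a, norm_nonneg b]

/-- `e^{iφ(w,x)/h}`, with `i · iψ = -ψ` already simplified. -/
noncomputable def bargmannKernel (h : ℝ) (w : ℂ) (x : ℝ) : ℂ :=
  cexp (-(w ^ 2 / 2 - √2 * w * x + x ^ 2 / 2) / h)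

section bargmannKernel

variable {h : ℝ}

theorem norm_bargmannKernel_le (hh : 0 < h) (w : ℂ) (x : ℝ) :
    ‖bargmannKernel h w x‖ ≤ Real.exp (‖w‖ ^ 2 / (2 * h)) := by
  rw [bargmannKernel, Complex.norm_exp, Real.exp_le_exp, div_ofReal_re, ← div_div]
  have hre : (-(w ^ 2 / 2 - √2 * w * x + x ^ 2 / 2)).re
      = -(w.re ^ 2 - w.im ^ 2) / 2 + √2 * w.re * x - x ^ 2 / 2 := by
    simp only [sq, neg_add_rev, neg_sub, add_re, neg_re, sub_re, div_ofNat_re, mul_re, mul_im,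
      ofReal_re, ofReal_im, mul_zero, zero_mul, sub_zero, add_zero]
    ring
  have hsq := sq_nonneg (x - √2 * w.re)
  rw [sub_sq, mul_pow, Real.sq_sqrt zero_le_two] at hsq
  rw [hre, Complex.sq_norm, Complex.normSq_apply]
  gcongr
  nlinarith

theorem hasDerivAt_bargmannKernel_x (w : ℂ) (x : ℝ) :
    HasDerivAt (bargmannKernel h w) ((√2 * w - x) / h * bargmannKernel h w x) x := by
  have hx : HasDerivAt (fun t : ℝ ↦ (t : ℂ)) 1 x := (hasDerivAt_id x).ofReal_comp
  have hexp : HasDerivAt (fun t : ℝ ↦ -(w ^ 2 / 2 - √2 * w * t + (t : ℂ) ^ 2 / 2) / h)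
      ((√2 * w - x) / h) x := by
    refine ((((hasDerivAt_const x (w ^ 2 / 2)).sub (hx.const_mul (√2 * w))).add
      ((hx.pow 2).div_const 2)).neg).div_const (h : ℂ) |>.congr_deriv ?_
    ring
  exact hexp.cexp.congr_deriv (mul_comm _ _)

theorem hasDerivAt_bargmannKernel_w (w : ℂ) (x : ℝ) :
    HasDerivAt (bargmannKernel h · x) ((√2 * x - w) / h * bargmannKernel h w x) w := by
  have hw := hasDerivAt_id w
  have hexp : HasDerivAt (fun v : ℂ ↦ -(v ^ 2 / 2 - √2 * v * x + (x : ℂ) ^ 2 / 2) / h)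
      ((√2 * x - w) / h) w := by
    refine (((((hw.pow 2).div_const 2).sub ((hw.const_mul (√2 : ℂ)).mul_const (x : ℂ))).add
      (hasDerivAt_const w ((x : ℂ) ^ 2 / 2))).neg).div_const (h : ℂ) |>.congr_deriv ?_
    simp only [id]
    ring
  exact hexp.cexp.congr_deriv (mul_comm _ _)

theorem hasDerivAt_bargmannKernel_x_x (w : ℂ) (x : ℝ) :
    HasDerivAt (fun t ↦ (√2 * w - t) / h * bargmannKernel h w t)
      ((((√2 * w - x) / h) ^ 2 - 1 / h) * bargmannKernel h w x) x := by
  have hx : HasDerivAt (fun t : ℝ ↦ (t : ℂ)) 1 x := (hasDerivAt_id x).ofReal_comp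
  refine (((hasDerivAt_const x (√2 * w)).sub hx).div_const (h : ℂ)).mul
    (hasDerivAt_bargmannKernel_x (h := h) w x) |>.congr_deriv ?_
  simp only [Pi.sub_apply]
  ring

/-- `(-h²∂ₓ² + x²) K = (2wh∂_w + h) K`, with the derivatives of `K` written out. -/
theorem bargmannKernel_intertwining (hh : h ≠ 0) (w : ℂ) (x : ℝ) :
    -(h : ℂ) ^ 2 * ((((√2 * w - x) / h) ^ 2 - 1 / h) * bargmannKernel h w x)
        + x ^ 2 * bargmannKernel h w x
      = 2 * w * h * ((√2 * x - w) / h * bargmannKernel h w x) + h * bargmannKernel h w x := by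
  have hs : (√2 : ℂ) ^ 2 = 2 := by rw [← ofReal_pow, Real.sq_sqrt zero_le_two]; norm_num
  have hc : (h : ℂ) ≠ 0 := ofReal_ne_zero.2 hh
  field_simp
  linear_combination (-(bargmannKernel h w x * w ^ 2)) * hs

theorem norm_sqrt_two_mul_sub_div_le (hh : 0 < h) (w : ℂ) (x : ℝ) :
    ‖(√2 * w - x) / (h : ℂ)‖ ≤ 2 * (‖w‖ + 1) / h * (1 + ‖x‖) := by
  rw [norm_div, norm_real, Real.norm_of_nonneg hh.le, div_mul_eq_mul_div]
  gcongr
  refine (norm_sqrt_two_mul_sub_le w x).trans ?_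
  rw [norm_real]
  nlinarith [norm_nonneg w, norm_nonneg x]

theorem isBigO_mul_bargmannKernel (hh : 0 < h) (w : ℂ) {p : ℝ → ℂ} {C : ℝ}
    (hp : ∀ x, ‖p x‖ ≤ C * (1 + ‖x‖) ^ 2) :
    (fun x ↦ p x * bargmannKernel h w x) =O[⊤] fun x ↦ (1 + ‖x‖) ^ 2 := by
  refine isBigO_top.2 ⟨C * Real.exp (‖w‖ ^ 2 / (2 * h)), fun x ↦ ?_⟩
  rw [norm_mul, Real.norm_of_nonneg (by positivity), mul_right_comm]
  exact mul_le_mul (hp x) (norm_bargmannKernel_le hh w x) (norm_nonneg _)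
    ((norm_nonneg _).trans (hp x))

theorem isBigO_bargmannKernel (hh : 0 < h) (w : ℂ) :
    bargmannKernel h w =O[⊤] fun x ↦ (1 + ‖x‖) ^ 2 := by
  simpa only [one_mul] using isBigO_mul_bargmannKernel hh w (p := fun _ ↦ 1) (C := 1)
    fun x ↦ by rw [norm_one, one_mul]; exact one_le_pow₀ (by simp)

theorem isBigO_sq_mul_bargmannKernel (hh : 0 < h) (w : ℂ) :
    (fun x : ℝ ↦ (x : ℂ) ^ 2 * bargmannKernel h w x) =O[⊤] fun x ↦ (1 + ‖x‖) ^ 2 :=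
  isBigO_mul_bargmannKernel hh w (C := 1) fun x ↦ by
    rw [one_mul, norm_pow, norm_real]
    gcongr
    simp

theorem isBigO_deriv_bargmannKernel (hh : 0 < h) (w : ℂ) :
    (fun x ↦ (√2 * w - x) / h * bargmannKernel h w x) =O[⊤] fun x ↦ (1 + ‖x‖) ^ 2 :=
  isBigO_mul_bargmannKernel hh w fun x ↦ (norm_sqrt_two_mul_sub_div_le hh w x).trans <|
    mul_le_mul_of_nonneg_left (le_self_pow₀ (by simp) two_ne_zero) (by positivity)

theorem isBigO_deriv_deriv_bargmannKernel (hh : 0 < h) (w : ℂ) :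
    (fun x ↦ (((√2 * w - x) / h) ^ 2 - 1 / h) * bargmannKernel h w x)
      =O[⊤] fun x ↦ (1 + ‖x‖) ^ 2 := by
  refine isBigO_mul_bargmannKernel hh w (C := (2 * (‖w‖ + 1) / h) ^ 2 + 1 / h) fun x ↦ ?_
  have h1 : 1 ≤ (1 + ‖x‖) ^ 2 := one_le_pow₀ (by simp)
  have h2 : 0 ≤ 1 / h := by positivity
  refine (norm_sub_le _ _).trans ?_
  rw [norm_pow, one_div, norm_inv, norm_real, Real.norm_of_nonneg hh.le, ← one_div]
  have := pow_le_pow_left₀ (norm_nonneg _) (norm_sqrt_two_mul_sub_div_le hh w x) 2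
  nlinarith

@[fun_prop]
theorem continuous_bargmannKernel (w : ℂ) : Continuous (bargmannKernel h w) := by
  unfold bargmannKernel
  fun_prop

theorem hasDerivAt_integral_bargmannKernel_mul (hh : 0 < h) (u : 𝓢(ℝ, ℂ)) (z : ℂ) :
    Integrable (fun x ↦ (√2 * x - z) / h * bargmannKernel h z x * u x) ∧
      HasDerivAt (fun w ↦ ∫ x, bargmannKernel h w x * u x)
        (∫ x, (√2 * x - z) / h * bargmannKernel h z x * u x) z := by
  set R := ‖z‖ + 1
  set C := 2 * (R + 1) / h * Real.exp (R ^ 2 / (2 * h))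
  refine hasDerivAt_integral_of_dominated_loc_of_deriv_le (Metric.ball_mem_nhds z one_pos)
    (.of_forall fun w ↦ ((continuous_bargmannKernel w).mul u.continuous).aestronglyMeasurable)
    (u.integrable_mul_of_isBigO (isBigO_bargmannKernel hh z)
      (continuous_bargmannKernel z).aestronglyMeasurable)
    (Continuous.aestronglyMeasurable (by fun_prop))
    (bound := fun x ↦ C * ((1 + ‖x‖) ^ 1 * ‖u x‖)) (.of_forall fun x w hw ↦ ?_)
    ((u.integrable_one_add_norm_pow_mul 1).const_mul C)
    (.of_forall fun x w _ ↦ (hasDerivAt_bargmannKernel_w w x).mul_const (u x))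
  have hwR : ‖w‖ ≤ R := by linarith [norm_le_norm_add_norm_sub' w z, mem_ball_iff_norm.1 hw]
  have hfac : ‖(√2 * x - w) / (h : ℂ)‖ ≤ 2 * (R + 1) / h * (1 + ‖x‖) := by
    rw [norm_div, norm_real, Real.norm_of_nonneg hh.le, div_mul_eq_mul_div]
    gcongr
    refine (norm_sqrt_two_mul_sub_le x w).trans ?_
    rw [norm_real]
    nlinarith [norm_nonneg w, norm_nonneg x]
  have hK : ‖bargmannKernel h w x‖ ≤ Real.exp (R ^ 2 / (2 * h)) :=
    (norm_bargmannKernel_le hh w x).trans (by gcongr)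
  rw [norm_mul, norm_mul, pow_one]
  calc _ ≤ 2 * (R + 1) / h * (1 + ‖x‖) * Real.exp (R ^ 2 / (2 * h)) * ‖u x‖ := by gcongr
    _ = _ := by ring

theorem integral_bargmannKernel_mul_derivCLM_derivCLM (hh : 0 < h) (w : ℂ) (u : 𝓢(ℝ, ℂ)) :
    ∫ x, bargmannKernel h w x * derivCLM ℝ ℂ (derivCLM ℝ ℂ u) x
      = ∫ x, (((√2 * w - x) / h) ^ 2 - 1 / h) * bargmannKernel h w x * u x := by
  rw [(derivCLM ℝ ℂ u).integral_mul_derivCLM_eq_neg (hasDerivAt_bargmannKernel_x w)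
      (by fun_prop) (isBigO_bargmannKernel hh w) (isBigO_deriv_bargmannKernel hh w),
    u.integral_mul_derivCLM_eq_neg (hasDerivAt_bargmannKernel_x_x w)
      (by fun_prop) (isBigO_deriv_bargmannKernel hh w) (isBigO_deriv_deriv_bargmannKernel hh w),
    neg_neg]

theorem integral_bargmannKernel_mul_harmonicOscillator (hh : 0 < h) (w : ℂ) (u : 𝓢(ℝ, ℂ)) :
    ∫ x, bargmannKernel h w x * (-(h : ℂ) ^ 2 * derivCLM ℝ ℂ (derivCLM ℝ ℂ u) x + x ^ 2 * u x)
      = ∫ x, (-(h : ℂ) ^ 2 * ((((√2 * w - x) / h) ^ 2 - 1 / h) * bargmannKernel h w x)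
          + x ^ 2 * bargmannKernel h w x) * u x := by
  have hu'' := (derivCLM ℝ ℂ (derivCLM ℝ ℂ u)).integrable_mul_of_isBigO (μ := volume)
    (isBigO_bargmannKernel hh w) (continuous_bargmannKernel w).aestronglyMeasurable
  have hx2 := u.integrable_mul_of_isBigO (μ := volume) (isBigO_sq_mul_bargmannKernel hh w)
    (Continuous.aestronglyMeasurable (by fun_prop))
  have hK'' := u.integrable_mul_of_isBigO (μ := volume) (isBigO_deriv_deriv_bargmannKernel hh w)
    (Continuous.aestronglyMeasurable (by fun_prop))
  calc _ = ∫ x, -(h : ℂ) ^ 2 * (bargmannKernel h w x * derivCLM ℝ ℂ (derivCLM ℝ ℂ u) x)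
          + x ^ 2 * bargmannKernel h w x * u x := by
        congr 1 with x
        ring
    _ = ∫ x, -(h : ℂ) ^ 2 * ((((√2 * w - x) / h) ^ 2 - 1 / h) * bargmannKernel h w x * u x)
          + x ^ 2 * bargmannKernel h w x * u x := by
        rw [integral_add (hu''.const_mul _) hx2, integral_add (hK''.const_mul _) hx2,
          integral_const_mul, integral_const_mul,
          integral_bargmannKernel_mul_derivCLM_derivCLM hh]
    _ = _ := by
        congr 1 with x
        ring

end bargmannKernel

/-- The FBI–Bargmann transform T_h with phase φ(z,x) = i(z²/2 − √2 zx + x²/2)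
intertwines the harmonic oscillator −h²∂ₓ² + x² with 2zh∂_z + h. -/
theorem stmt11 (h : ℝ) (hh : 0 < h) (u : SchwartzMap ℝ ℂ) (z : ℂ) :
    (∫ x : ℝ, Complex.exp (Complex.I *
        (Complex.I * (z ^ 2 / 2 - (Real.sqrt 2 : ℂ) * z * (x : ℂ) + (x : ℂ) ^ 2 / 2)) / (h : ℂ)) *
        (-(h : ℂ) ^ 2 * iteratedDeriv 2 (fun t : ℝ => u t) x + (x : ℂ) ^ 2 * u x))
      = 2 * z * (h : ℂ) *
          deriv (fun w : ℂ => ∫ x : ℝ, Complex.exp (Complex.I *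
            (Complex.I * (w ^ 2 / 2 - (Real.sqrt 2 : ℂ) * w * (x : ℂ) + (x : ℂ) ^ 2 / 2)) / (h : ℂ)) *
            u x) z
        + (h : ℂ) * ∫ x : ℝ, Complex.exp (Complex.I *
            (Complex.I * (z ^ 2 / 2 - (Real.sqrt 2 : ℂ) * z * (x : ℂ) + (x : ℂ) ^ 2 / 2)) / (h : ℂ)) *
            u x := by
  have hK : ∀ (w : ℂ) (x : ℝ), Complex.exp (Complex.I *
      (Complex.I * (w ^ 2 / 2 - (Real.sqrt 2 : ℂ) * w * (x : ℂ) + (x : ℂ) ^ 2 / 2)) / (h : ℂ))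
      = bargmannKernel h w x := fun w x ↦ by
    rw [bargmannKernel, ← mul_assoc, I_mul_I, neg_one_mul]
  simp only [hK, u.iteratedDeriv_two_eq]
  obtain ⟨hderiv_int, hderiv⟩ := hasDerivAt_integral_bargmannKernel_mul hh u z
  have hK_int := u.integrable_mul_of_isBigO (μ := volume) (isBigO_bargmannKernel hh z)
    (continuous_bargmannKernel z).aestronglyMeasurable
  simp_rw [hderiv.deriv, integral_bargmannKernel_mul_harmonicOscillator hh z u,
    bargmannKernel_intertwining hh.ne', ← integral_const_mul,
    ← integral_add (hderiv_int.const_mul _) (hK_int.const_mul _)]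
  congr 1 with x
  ring
end
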